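/- Let w = w_0...w_{n−1} be a word with palindromic reduced word, C the associated critical-curve polynomial, and φ_t = arctan2(Q_{t−1}, Q_t) the angle of the t-th ray, with Poisson bracket {f, C} = (∂f/∂a)(∂C/∂b) − (∂f/∂b)(∂C/∂a). Then the sum over t = 1 to n of {φ_t, C} vanishes modulo the ideal generated by C; i.e., the sum of the ray angles is constant along the curve C = 0. -/

import Mathlib

/-- Continuants of a two-letter word: `s t = true` means the letter `w_t` is the
indeterminate `a`, `s t = false` means it is `b`.  `contQ s a b t = Q_t`, with
`Q_0 = 0`, `Q_1 = 1`, `Q_{t+1} = w_t Q_t - Q_{t-1}`. -/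
def contQ (s : ℕ → Bool) (a b : ℝ) : ℕ → ℝ
  | 0 => 0
  | 1 => 1
  | (t+2) => (if s (t+1) then a else b) * contQ s a b (t+1) - contQ s a b t

/-- The Poisson bracket `{f, g} = (∂f/∂a)(∂g/∂b) - (∂f/∂b)(∂g/∂a)`. -/
noncomputable def pb (f g : ℝ → ℝ → ℝ) (a b : ℝ) : ℝ :=
  deriv (fun u => f u b) a * deriv (fun v => g a v) b -
    deriv (fun v => f a v) b * deriv (fun u => g u b) a

/-- `Δ_t = Q_t {Q_{t-1}, C} - Q_{t-1} {Q_t, C}`, so that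
`{φ_t, C} = Δ_t/(Q_t² + Q_{t-1}²)` for the ray angle `φ_t = arctan2(Q_{t-1}, Q_t)`. -/
noncomputable def Δ (s : ℕ → Bool) (C : ℝ → ℝ → ℝ) (t : ℕ) (a b : ℝ) : ℝ :=
  contQ s a b t * pb (fun u v => contQ s u v (t - 1)) C a b -
    contQ s a b (t - 1) * pb (fun u v => contQ s u v t) C a b


/-! On the curve `C = 0` both `Q_t` and `{Q_t, C}` are invariant under the reflection
`t ↦ n - t`. Each solves a three-term recurrence `f_{t+1} = w_t f_t - f_{t-1} + g_t` with
palindromic coefficients (for `{Q_t, C}` the inhomogeneity is `{w_t, C} Q_t`, palindromic once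
`Q_t` is), so `f_{n-t} - f_t` solves a homogeneous recurrence. It vanishes at the two central
indices, because `C = Q_{k+1} - Q_{n-k-1}` and `{C, C} = 0`, hence everywhere. Then
`Δ_{n+1-t} = -Δ_t` with equal denominators, and the terms of the sum cancel in pairs. -/

open Finset

section Recurrence

variable {R : Type*} [Ring R] {n : ℕ} {c : ℕ → R}

theorem eq_zero_of_consecutive_zeros {d : ℕ → R} {m : ℕ}
    (hrec : ∀ t, t + 2 ≤ n → d (t + 2) = c (t + 1) * d (t + 1) - d t)
    (hm : m + 1 ≤ n) (h0 : d m = 0) (h1 : d (m + 1) = 0) : ∀ t ≤ n, d t = 0 := by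
  have up : ∀ j, m + 1 + j ≤ n → d (m + j) = 0 ∧ d (m + j + 1) = 0 := by
    intro j
    induction j with
    | zero => exact fun _ => ⟨h0, h1⟩
    | succ j ih =>
      intro hj
      obtain ⟨e0, e1⟩ := ih (by omega)
      refine ⟨e1, ?_⟩
      rw [show m + (j + 1) + 1 = m + j + 2 by omega, hrec _ (by omega), e1, e0, mul_zero,
        sub_zero]
  have down : ∀ j ≤ m, d (m - j) = 0 ∧ d (m - j + 1) = 0 := by
    intro j
    induction j with
    | zero => exact fun _ => ⟨h0, h1⟩
    | succ j ih =>
      intro hj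
      obtain ⟨e0, e1⟩ := ih (by omega)
      have hstep := hrec (m - (j + 1)) (by omega)
      rw [show m - (j + 1) + 2 = m - j + 1 by omega, show m - (j + 1) + 1 = m - j by omega,
        e0, e1] at hstep
      exact ⟨by simpa using hstep, by rwa [show m - (j + 1) + 1 = m - j by omega]⟩
  intro t ht
  rcases le_or_gt t m with h | h
  · simpa [Nat.sub_sub_self h] using (down (m - t) (Nat.sub_le m t)).1
  · simpa [show m + (t - m - 1) + 1 = t by omega] using (up (t - m - 1) (by omega)).2

theorem reflect_eq_of_palindromic_recurrence {k : ℕ} {f g : ℕ → R}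
    (hrec : ∀ t, f (t + 2) = c (t + 1) * f (t + 1) - f t + g (t + 1))
    (hc : ∀ t, 1 ≤ t → t ≤ n - 1 → c (n - t) = c t)
    (hg : ∀ t, 1 ≤ t → t ≤ n - 1 → g (n - t) = g t)
    (hparity : n = 2 * k + 1 ∨ (n = 2 * k ∧ 1 ≤ k))
    (hcentre : f (n - (k + 1)) = f (k + 1)) : ∀ t ≤ n, f (n - t) = f t := by
  have hdiff : ∀ t ≤ n, f (n - t) - f t = 0 := by
    refine eq_zero_of_consecutive_zeros (c := c) (m := k) ?_ (by omega) ?_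
      (sub_eq_zero.2 hcentre)
    · intro t ht
      have hrefl := hrec (n - (t + 2))
      rw [show n - (t + 2) + 2 = n - t by omega, show n - (t + 2) + 1 = n - (t + 1) by omega,
        hc (t + 1) (by omega) (by omega), hg (t + 1) (by omega) (by omega)] at hrefl
      rw [hrec t, hrefl, mul_sub]
      abel
    · rcases hparity with h | h
      · rw [show n - k = k + 1 by omega, ← hcentre, show n - (k + 1) = k by omega, sub_self]
      · rw [show n - k = k by omega, sub_self]
  exact fun t ht => sub_eq_zero.1 (hdiff t ht)

end Recurrence

theorem sum_Icc_eq_zero_of_neg_reflect {R : Type*} [Ring R] [NoZeroDivisors R] [CharZero R]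
    (F : ℕ → R) (n : ℕ) (hF : ∀ t ∈ Icc 1 n, F (n + 1 - t) = -F t) :
    ∑ t ∈ Icc 1 n, F t = 0 := by
  have hmem : ∀ t ∈ Icc 1 n, n + 1 - t ∈ Icc 1 n := by
    intro t
    simp only [mem_Icc]
    omega
  have hinv : ∀ t ∈ Icc 1 n, n + 1 - (n + 1 - t) = t := by
    intro t
    simp only [mem_Icc]
    omega
  have hreflect : ∑ t ∈ Icc 1 n, F t = ∑ t ∈ Icc 1 n, F (n + 1 - t) :=
    sum_nbij' _ _ hmem hmem hinv hinv fun t ht => by rw [hinv t ht]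
  rw [sum_congr rfl hF, sum_neg_distrib] at hreflect
  exact CharZero.eq_neg_self_iff.1 hreflect

theorem pb_self (f : ℝ → ℝ → ℝ) (a b : ℝ) : pb f f a b = 0 := by
  unfold pb
  ring

section PoissonBracket

variable {f g : ℝ → ℝ → ℝ} {a b : ℝ}

theorem Differentiable.differentiableAt_left (hf : Differentiable ℝ (Function.uncurry f)) :
    DifferentiableAt ℝ (fun u => f u b) a :=
  (hf.comp (differentiable_id.prodMk (differentiable_const b))).differentiableAt

theorem Differentiable.differentiableAt_right (hf : Differentiable ℝ (Function.uncurry f)) :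
    DifferentiableAt ℝ (fun v => f a v) b :=
  (hf.comp ((differentiable_const a).prodMk differentiable_id)).differentiableAt

theorem pb_sub_left (hf : Differentiable ℝ (Function.uncurry f))
    (hg : Differentiable ℝ (Function.uncurry g)) (C : ℝ → ℝ → ℝ) :
    pb (fun u v => f u v - g u v) C a b = pb f C a b - pb g C a b := by
  unfold pb
  rw [deriv_fun_sub (hf.differentiableAt_left) (hg.differentiableAt_left),
    deriv_fun_sub (hf.differentiableAt_right) (hg.differentiableAt_right)]
  ring

theorem pb_mul_left (hf : Differentiable ℝ (Function.uncurry f))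
    (hg : Differentiable ℝ (Function.uncurry g)) (C : ℝ → ℝ → ℝ) :
    pb (fun u v => f u v * g u v) C a b = f a b * pb g C a b + g a b * pb f C a b := by
  unfold pb
  rw [deriv_fun_mul (hf.differentiableAt_left) (hg.differentiableAt_left),
    deriv_fun_mul (hf.differentiableAt_right) (hg.differentiableAt_right)]
  ring

end PoissonBracket

theorem differentiable_ite_fst_snd (p : Prop) [Decidable p] :
    Differentiable ℝ (Function.uncurry fun u v : ℝ => if p then u else v) := by
  by_cases hp : p
  · simp only [hp, if_true]
    exact differentiable_fst
  · simp only [hp, if_false]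
    exact differentiable_snd

theorem differentiable_contQ (s : ℕ → Bool) :
    ∀ t, Differentiable ℝ (Function.uncurry fun u v => contQ s u v t)
  | 0 => differentiable_const 0
  | 1 => differentiable_const 1
  | t + 2 =>
    ((differentiable_ite_fst_snd _).mul (differentiable_contQ s (t + 1))).sub
      (differentiable_contQ s t)

theorem pb_contQ_add_two (s : ℕ → Bool) (C : ℝ → ℝ → ℝ) (a b : ℝ) (t : ℕ) :
    pb (fun u v => contQ s u v (t + 2)) C a b =
      (if s (t + 1) then a else b) * pb (fun u v => contQ s u v (t + 1)) C a b
        - pb (fun u v => contQ s u v t) C a b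
        + contQ s a b (t + 1) * pb (fun u v => if s (t + 1) then u else v) C a b := by
  have hprod : Differentiable ℝ
      (Function.uncurry fun u v => (if s (t + 1) then u else v) * contQ s u v (t + 1)) :=
    (differentiable_ite_fst_snd _).mul (differentiable_contQ s (t + 1))
  change pb (fun u v => (if s (t + 1) then u else v) * contQ s u v (t + 1) - contQ s u v t) C a b
    = _
  rw [pb_sub_left hprod (differentiable_contQ s t),
    pb_mul_left (differentiable_ite_fst_snd _) (differentiable_contQ s (t + 1))]
  ring

theorem angle_bracket_reflect {s : ℕ → Bool} {C : ℝ → ℝ → ℝ} {a b : ℝ} {n t : ℕ}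
    (hQ : ∀ t ≤ n, contQ s a b (n - t) = contQ s a b t)
    (hQC : ∀ t ≤ n, pb (fun u v => contQ s u v (n - t)) C a b =
      pb (fun u v => contQ s u v t) C a b)
    (ht : t ∈ Icc 1 n) :
    Δ s C (n + 1 - t) a b / (contQ s a b (n + 1 - t) ^ 2 + contQ s a b (n + 1 - t - 1) ^ 2) =
      -(Δ s C t a b / (contQ s a b t ^ 2 + contQ s a b (t - 1) ^ 2)) := by
  rw [mem_Icc] at ht
  unfold Δ
  rw [show n + 1 - t - 1 = n - t by omega, show n + 1 - t = n - (t - 1) by omega,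
    hQ t ht.2, hQ (t - 1) (by omega), hQC t ht.2, hQC (t - 1) (by omega)]
  ring

theorem sum_angle_brackets_vanishes_general (s : ℕ → Bool) (n k : ℕ)
    (hparity : n = 2 * k + 1 ∨ (n = 2 * k ∧ 1 ≤ k))
    (hpal : ∀ i, 1 ≤ i → i ≤ n - 1 → s i = s (n - i))
    (C : ℝ → ℝ → ℝ)
    (hC : ∀ a b : ℝ, C a b =
      contQ s a b (k + 1) - contQ s a b (if n = 2 * k + 1 then k else k - 1)) :
    ∀ a b : ℝ, C a b = 0 →
      (∑ t ∈ Finset.Icc 1 n,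
        Δ s C t a b / (contQ s a b t ^ 2 + contQ s a b (t - 1) ^ 2)) = 0 := by
  intro a b hab
  have hcurve : (fun u v => contQ s u v (k + 1) - contQ s u v (n - (k + 1))) = C := by
    funext u v
    rw [hC, show n - (k + 1) = if n = 2 * k + 1 then k else k - 1 by split_ifs <;> omega]
  have hQcentre : contQ s a b (n - (k + 1)) = contQ s a b (k + 1) := by
    rw [eq_comm, ← sub_eq_zero, ← hab, ← hcurve]
  have hQ : ∀ t ≤ n, contQ s a b (n - t) = contQ s a b t :=
    reflect_eq_of_palindromic_recurrence (c := fun t => if s t then a else b) (g := 0)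
      (fun t => (add_zero _).symm) (fun t h1 h2 => by simp only [hpal t h1 h2])
      (fun _ _ _ => rfl) hparity hQcentre
  have hQCcentre : pb (fun u v => contQ s u v (n - (k + 1))) C a b =
      pb (fun u v => contQ s u v (k + 1)) C a b := by
    rw [eq_comm, ← sub_eq_zero, ← pb_sub_left (differentiable_contQ s _)
      (differentiable_contQ s _), hcurve, pb_self]
  have hQC : ∀ t ≤ n, pb (fun u v => contQ s u v (n - t)) C a b =
      pb (fun u v => contQ s u v t) C a b :=
    reflect_eq_of_palindromic_recurrence (c := fun t => if s t then a else b)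
      (f := fun t => pb (fun u v => contQ s u v t) C a b)
      (g := fun t => contQ s a b t * pb (fun u v => if s t then u else v) C a b)
      (pb_contQ_add_two s C a b) (fun t h1 h2 => by simp only [hpal t h1 h2])
      (fun t h1 h2 => by simp only [hQ t (by omega), hpal t h1 h2]) hparity
      hQCcentre
  exact sum_Icc_eq_zero_of_neg_reflect _ n fun t ht => angle_bracket_reflect hQ hQC ht

/-- Along a critical curve (reduced word a palindrome, `C = Q_{k+1} - Q_k` for
`n = 2k+1` odd, `C = Q_{k+1} - Q_{k-1}` for `n = 2k` even), the sum
`∑_{t=1}^n {φ_t, C} = ∑_{t=1}^n Δ_t/(Q_t² + Q_{t-1}²)` vanishes on `C = 0`: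
the sum of the ray angles is constant along the curve. -/
theorem sum_angle_brackets_vanishes (s : ℕ → Bool) (n k : ℕ) (hn2 : 2 ≤ n)
    (hparity : n = 2 * k + 1 ∨ (n = 2 * k ∧ 1 ≤ k))
    (hpal : ∀ i, 1 ≤ i → i ≤ n - 1 → s i = s (n - i))
    (C : ℝ → ℝ → ℝ)
    (hC : ∀ a b : ℝ, C a b =
      contQ s a b (k + 1) - contQ s a b (if n = 2 * k + 1 then k else k - 1)) :
    ∀ a b : ℝ, C a b = 0 →
      (∑ t ∈ Finset.Icc 1 n,
        Δ s C t a b / (contQ s a b t ^ 2 + contQ s a b (t - 1) ^ 2)) = 0 :=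
  sum_angle_brackets_vanishes_general s n k hparity hpal C hC
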